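/- Let G be a connected undirected graph with degrees dᵢ, and for each node i let aᵢ > 0, αᵢ = dᵢ/(dᵢ+aᵢ), and restart distribution vᵢ = aᵢ/Σₖaₖ. Then the stationary distribution of P̃ = AD⁻¹W + (I−A)𝟙vᵀ is πⱼ = (dⱼ+aⱼ)/(2|E| + Σₖaₖ), and the Location-of-Restart PageRank is ρⱼ(v) = aⱼ/Σₖaₖ. -/

import Mathlib

/-!
Put `w = d + a`. Since `αᵢ = dᵢ / wᵢ`, the walk part is `A D⁻¹ W = diag(w)⁻¹ W`, hence
`w (A D⁻¹ W) = 𝟙ᵀ W = d` by symmetry of `W`, while `w (I - A) = a = (∑ a) v`. So `w P̃ = w`,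
and `π` is `w` normalised by `∑ w = 2|E| + ∑ a`. The same identities give `w (I - A D⁻¹ W) = a`;
as row `i` of `A D⁻¹ W` sums to `αᵢ < 1`, `I - A D⁻¹ W` is strictly diagonally dominant, hence
invertible, and `v (I - A D⁻¹ W)⁻¹ (I - A) = w (I - A) / ∑ a = a / ∑ a`.
-/

open Matrix

namespace Matrix

variable {ι : Type*} [Fintype ι] [DecidableEq ι]

theorem det_one_sub_ne_zero_of_sum_abs_lt_one {Q : Matrix ι ι ℝ}
    (h : ∀ i, ∑ j, |Q i j| < 1) : (1 - Q).det ≠ 0 := by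
  refine det_ne_zero_of_sum_row_lt_diag fun k => ?_
  have hoff : ∀ j ∈ Finset.univ.erase k, ‖(1 - Q) k j‖ = |Q k j| := fun j hj => by
    simp [one_apply_ne' (Finset.ne_of_mem_erase hj)]
  have hsplit := Finset.add_sum_erase Finset.univ (fun j => |Q k j|) (Finset.mem_univ k)
  calc ∑ j ∈ Finset.univ.erase k, ‖(1 - Q) k j‖ = ∑ j, |Q k j| - |Q k k| := by
        rw [Finset.sum_congr rfl hoff]; linarith
    _ < 1 - |Q k k| := by linarith [h k]
    _ ≤ ‖(1 - Q) k k‖ := by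
        simpa [Real.norm_eq_abs] using abs_sub_abs_le_abs_sub 1 (Q k k)

theorem vecMul_nonsing_inv_eq_of_vecMul_eq {R : Type*} [CommRing R] {M : Matrix ι ι R}
    (hM : IsUnit M.det) {x y : ι → R} (h : x ᵥ* M = y) : y ᵥ* M⁻¹ = x := by
  rw [← h, vecMul_vecMul, mul_nonsing_inv _ hM, vecMul_one]

omit [DecidableEq ι] in
theorem vecMul_replicateRow {R : Type*} [CommSemiring R] (x v : ι → R) :
    x ᵥ* replicateRow ι v = (∑ i, x i) • v := by
  rw [← one_vecMulVec, vecMul_vecMulVec, dotProduct_one]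

theorem inv_diagonal_of_ne_zero {K : Type*} [Field K] {d : ι → K} (hd : ∀ i, d i ≠ 0) :
    (diagonal d)⁻¹ = diagonal d⁻¹ :=
  inv_eq_left_inv <| by
    rw [diagonal_mul_diagonal, ← diagonal_one]
    exact congrArg diagonal (funext fun i => inv_mul_cancel₀ (hd i))

theorem diagonal_div_mul_inv_diagonal {K : Type*} [Field K] {d a : ι → K} (hd : ∀ i, d i ≠ 0) :
    diagonal (fun i => d i / (d i + a i)) * (diagonal d)⁻¹ = diagonal (d + a)⁻¹ := by
  rw [inv_diagonal_of_ne_zero hd, diagonal_mul_diagonal]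
  exact congrArg diagonal (funext fun i => by
    rw [Pi.inv_apply, Pi.inv_apply, Pi.add_apply, div_eq_mul_inv, mul_comm, ← mul_assoc,
      inv_mul_cancel₀ (hd i), one_mul])

theorem vecMul_diagonal_inv_mul {K : Type*} [Field K] {w : ι → K} (hw : ∀ i, w i ≠ 0)
    (W : Matrix ι ι K) : w ᵥ* (diagonal w⁻¹ * W) = 1 ᵥ* W := by
  rw [← vecMul_vecMul]
  congr 1
  exact funext fun i => by rw [vecMul_diagonal, Pi.inv_apply, mul_inv_cancel₀ (hw i), Pi.one_apply]

end Matrix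

section RestartWalk

variable {ι : Type*} [Fintype ι] [DecidableEq ι] {W : Matrix ι ι ℝ} {d a : ι → ℝ}

theorem vecMul_one_sub_diagonal_div (hw : ∀ i, d i + a i ≠ 0) :
    (d + a) ᵥ* (1 - diagonal (fun i => d i / (d i + a i))) = a := by
  ext i
  rw [vecMul_sub, vecMul_one, Pi.sub_apply, vecMul_diagonal, Pi.add_apply,
    mul_div_cancel₀ _ (hw i), add_sub_cancel_left]

omit [DecidableEq ι] in
theorem nonneg_of_mulVec_one_eq (hWd : W *ᵥ 1 = d) (hW0 : ∀ i j, 0 ≤ W i j) (i : ι) :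
    0 ≤ d i := by
  rw [← hWd]
  exact Finset.sum_nonneg fun j _ => mul_nonneg (hW0 i j) zero_le_one

theorem vecMul_add_diagonal_inv_mul (hWs : W.IsSymm) (hWd : W *ᵥ 1 = d)
    (hw : ∀ i, d i + a i ≠ 0) : (d + a) ᵥ* (diagonal (d + a)⁻¹ * W) = d := by
  rw [vecMul_diagonal_inv_mul (w := d + a) hw, ← hWd, ← vecMul_transpose, hWs.eq]

theorem vecMul_add_one_sub_diagonal_inv_mul (hWs : W.IsSymm) (hWd : W *ᵥ 1 = d)
    (hw : ∀ i, d i + a i ≠ 0) : (d + a) ᵥ* (1 - diagonal (d + a)⁻¹ * W) = a := by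
  rw [vecMul_sub, vecMul_one, vecMul_add_diagonal_inv_mul hWs hWd hw, add_sub_cancel_left]

theorem det_one_sub_diagonal_inv_mul_ne_zero (hWd : W *ᵥ 1 = d) (hW0 : ∀ i j, 0 ≤ W i j)
    (ha : ∀ i, 0 < a i) : (1 - diagonal (d + a)⁻¹ * W).det ≠ 0 := by
  refine det_one_sub_ne_zero_of_sum_abs_lt_one fun i => ?_
  have hd := nonneg_of_mulVec_one_eq hWd hW0 i
  have hrow : ∑ j, W i j = d i := by simpa [mulVec, dotProduct] using congrFun hWd i
  calc ∑ j, |(diagonal (d + a)⁻¹ * W) i j| = (d i + a i)⁻¹ * d i := by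
        simp_rw [diagonal_mul, abs_mul, abs_of_nonneg (hW0 i _), ← Finset.mul_sum, hrow,
          Pi.inv_apply, Pi.add_apply, abs_of_pos (inv_pos.2 (add_pos_of_nonneg_of_pos hd (ha i)))]
    _ < 1 := by
        rw [inv_mul_lt_one₀ (by linarith [ha i])]
        linarith [ha i]

theorem vecMul_restart_eq_self [Nonempty ι] (hWs : W.IsSymm) (hWd : W *ᵥ 1 = d)
    (hW0 : ∀ i j, 0 ≤ W i j) (ha : ∀ i, 0 < a i) :
    (d + a) ᵥ* (diagonal (d + a)⁻¹ * W + (1 - diagonal (fun i => d i / (d i + a i))) *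
      replicateRow ι ((∑ k, a k)⁻¹ • a)) = d + a := by
  have hw i : d i + a i ≠ 0 := by linarith [nonneg_of_mulVec_one_eq hWd hW0 i, ha i]
  have hsum : ∑ k, a k ≠ 0 := (Finset.sum_pos (fun k _ => ha k) Finset.univ_nonempty).ne'
  rw [vecMul_add, vecMul_add_diagonal_inv_mul hWs hWd hw, ← vecMul_vecMul,
    vecMul_one_sub_diagonal_div hw, vecMul_replicateRow, smul_smul, mul_inv_cancel₀ hsum, one_smul]

theorem vecMul_locationOfRestart (hWs : W.IsSymm) (hWd : W *ᵥ 1 = d)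
    (hW0 : ∀ i j, 0 ≤ W i j) (ha : ∀ i, 0 < a i) :
    ((∑ k, a k)⁻¹ • a) ᵥ* ((1 - diagonal (d + a)⁻¹ * W)⁻¹ *
      (1 - diagonal (fun i => d i / (d i + a i)))) = (∑ k, a k)⁻¹ • a := by
  have hw i : d i + a i ≠ 0 := by linarith [nonneg_of_mulVec_one_eq hWd hW0 i, ha i]
  rw [smul_vecMul, ← vecMul_vecMul, vecMul_nonsing_inv_eq_of_vecMul_eq
    (isUnit_iff_ne_zero.2 (det_one_sub_diagonal_inv_mul_ne_zero hWd hW0 ha))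
    (vecMul_add_one_sub_diagonal_inv_mul hWs hWd hw), vecMul_one_sub_diagonal_div hw]

end RestartWalk

namespace SimpleGraph

variable {V : Type*} [Fintype V] [DecidableEq V] {G : SimpleGraph V} [DecidableRel G.Adj]

omit [DecidableEq V] in
theorem adjMatrix_mulVec_one : G.adjMatrix ℝ *ᵥ 1 = fun i => (G.degree i : ℝ) :=
  funext fun _ => by simp

omit [Fintype V] [DecidableEq V] in
theorem adjMatrix_nonneg (i j : V) : 0 ≤ G.adjMatrix ℝ i j := by
  rw [adjMatrix_apply]; split_ifs <;> norm_num

/-- `(diagonal d)⁻¹` is the junk value `0` as soon as some degree vanishes; for a connected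
graph that happens only on a single vertex, where the adjacency matrix is `0`. -/
theorem Connected.diagonal_div_mul_inv_diagonal_degree_mul_adjMatrix (hG : G.Connected)
    (a : V → ℝ) :
    diagonal (fun i => (G.degree i : ℝ) / (G.degree i + a i)) *
        (diagonal fun i => (G.degree i : ℝ))⁻¹ * G.adjMatrix ℝ =
      diagonal ((fun i => (G.degree i : ℝ)) + a)⁻¹ * G.adjMatrix ℝ := by
  rcases subsingleton_or_nontrivial V with hV | hV
  · have hW : G.adjMatrix ℝ = 0 := by
      ext i j
      simp [Subsingleton.elim i j]
    rw [hW, Matrix.mul_zero, Matrix.mul_zero]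
  · rw [diagonal_div_mul_inv_diagonal fun i =>
      Nat.cast_ne_zero.2 (hG.preconnected.degree_pos_of_nontrivial i).ne']

end SimpleGraph

theorem stmt14 {n : ℕ} (G : SimpleGraph (Fin n)) [DecidableRel G.Adj]
    (hG : G.Connected) (a : Fin n → ℝ) (ha : ∀ i, 0 < a i)
    (W D A : Matrix (Fin n) (Fin n) ℝ) (d α v π : Fin n → ℝ)
    (hW : W = G.adjMatrix ℝ) (hd : ∀ i, d i = (G.degree i : ℝ))
    (hD : D = Matrix.diagonal d)
    (hα : ∀ i, α i = d i / (d i + a i)) (hA : A = Matrix.diagonal α)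
    (hv : ∀ i, v i = a i / ∑ k, a k)
    (hπ : ∀ j, π j = (d j + a j) / ((∑ k, d k) + ∑ k, a k))
    (Ptilde : Matrix (Fin n) (Fin n) ℝ)
    (hPt : Ptilde = A * D⁻¹ * W + (1 - A) * Matrix.of (fun _ j => v j)) :
    (Matrix.vecMul π Ptilde = π ∧ ∑ i, π i = 1) ∧
    ∀ j, (Matrix.vecMul v (((1 - A * D⁻¹ * W)⁻¹) * (1 - A))) j = a j / ∑ k, a k := by
  obtain rfl : α = fun i => d i / (d i + a i) := funext hα
  obtain rfl : v = (∑ k, a k)⁻¹ • a := funext fun i => by simp [hv, div_eq_inv_mul]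
  obtain rfl : π = ((∑ k, d k) + ∑ k, a k)⁻¹ • (d + a) :=
    funext fun j => by simp [hπ, div_eq_inv_mul]
  obtain rfl : d = fun i => (G.degree i : ℝ) := funext hd
  have : Nonempty (Fin n) := hG.nonempty
  subst hW hD hA hPt
  rw [hG.diagonal_div_mul_inv_diagonal_degree_mul_adjMatrix a]
  refine ⟨⟨?_, ?_⟩, fun j => ?_⟩
  · rw [smul_vecMul]
    -- `of fun _ j => v j` is `replicateRow _ v` unfolded
    exact congrArg _ (vecMul_restart_eq_self G.isSymm_adjMatrix G.adjMatrix_mulVec_one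
      G.adjMatrix_nonneg ha)
  · have hS : 0 < (∑ k, (G.degree k : ℝ)) + ∑ k, a k := add_pos_of_nonneg_of_pos
      (by positivity) (Finset.sum_pos (fun k _ => ha k) Finset.univ_nonempty)
    simp [← Finset.mul_sum, Finset.sum_add_distrib, hS.ne']
  · rw [vecMul_locationOfRestart G.isSymm_adjMatrix G.adjMatrix_mulVec_one G.adjMatrix_nonneg ha]
    simp [div_eq_inv_mul]
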